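/- arXiv:math/0209124 — 6 statements merged into one kernel-verified Lean document; each statement's English description precedes it below -/
import Mathlib

section
/- Let f be a holomorphic (ℂ-differentiable) function defined on an open subset O of Mat(2,ℂ) containing all of SL(2,ℂ), and suppose that for every U ∈ SL(2,ℂ) one has (∂₊₊ f)(U) = 0 and (∂₀ f)(U) = f(U) (i.e. f is analytic of charge +1). Then f is linear in the first column of U on SL(2,ℂ): there exist constants f₁, f₂ ∈ ℂ such that f(U) = f₁ · U₀₀ + f₂ · U₁₀ for all U ∈ SL(2,ℂ). -/
/-! The flows `U ↦ U exp(zE)` and `U ↦ U exp(zH)` preserve `SL(2,ℂ)`, so `∂₊₊ f = 0` and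
`∂₀ f = f` integrate to `f (U exp(zE)) = f U` and `f (U exp(zH)) = e^z f U`. Two matrices of
`SL(2,ℂ)` whose first columns satisfy `V₀ = c U₀` differ by a right factor `[[c, *], [0, c⁻¹]]`,
hence `f V = c f U`. On the charts with first column `(1, t)` and `(s, 1)` this gives entire
functions `G`, `N` with `G t = t N (1/t)`. The slope `(G t - G 0) / t` is then entire and tends
to `N 0` at infinity, so by Liouville it is constant and `G` is affine, which is the claim. -/

/-- The determinant of a 2×2 complex matrix, viewed as an element of `Fin 2 → Fin 2 → ℂ`. -/
def det2 (U : Fin 2 → Fin 2 → ℂ) : ℂ := U 0 0 * U 1 1 - U 0 1 * U 1 0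

/-- The direction `U·E` with `E = [[0,1],[0,0]]`, defining the fundamental vector
field `∂₊₊` of the right `SL(2,ℂ)`-action: `(U·E)_{i0} = 0`, `(U·E)_{i1} = U_{i0}`. -/
def dirE (U : Fin 2 → Fin 2 → ℂ) : Fin 2 → Fin 2 → ℂ :=
  fun i j => if j = 1 then U i 0 else 0

/-- The direction `U·H` with `H = [[1,0],[0,−1]]`, defining the fundamental vector
field `∂₀` of the right `SL(2,ℂ)`-action: `(U·H)_{i0} = U_{i0}`, `(U·H)_{i1} = −U_{i1}`. -/
def dirH (U : Fin 2 → Fin 2 → ℂ) : Fin 2 → Fin 2 → ℂ :=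
  fun i j => if j = 0 then U i 0 else -(U i 1)

open Filter Topology Complex

theorem eq_const_add_smul_of_eq_smul_comp_inv {E : Type*} [NormedAddCommGroup E]
    [NormedSpace ℂ E] [CompleteSpace E] {G N : ℂ → E} (hG : Differentiable ℂ G)
    (hN : ContinuousAt N 0) (hGN : ∀ t ≠ 0, G t = t • N t⁻¹) (t : ℂ) : G t = G 0 + t • N 0 := by
  have hK : Differentiable ℂ (dslope G 0) :=
    differentiableOn_univ.1 <| (differentiableOn_dslope univ_mem).2 hG.differentiableOn
  have hK_eq : dslope G 0 =ᶠ[Bornology.cobounded ℂ] fun t => N t⁻¹ - t⁻¹ • G 0 := by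
    filter_upwards [Bornology.eventually_ne_cobounded 0] with t ht
    rw [dslope_of_ne _ ht, slope_def_module, sub_zero, hGN t ht, smul_sub, smul_smul,
      inv_mul_cancel₀ ht, one_smul]
  have hK_lim : Tendsto (dslope G 0) (cocompact ℂ) (𝓝 (N 0)) := by
    rw [← Metric.cobounded_eq_cocompact]
    refine Tendsto.congr' hK_eq.symm ?_
    simpa using (hN.tendsto.comp tendsto_inv₀_cobounded).sub
      (tendsto_inv₀_cobounded.smul_const (G 0))
  rw [← sub_eq_iff_eq_add', ← sub_smul_dslope, sub_zero,
    hK.apply_eq_of_tendsto_cocompact t hK_lim]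

theorem eq_exp_mul_of_hasDerivAt {φ : ℂ → ℂ} {c : ℂ} (hφ : ∀ z, HasDerivAt φ (c * φ z) z)
    (z : ℂ) : φ z = exp (c * z) * φ 0 := by
  have hψ : ∀ w, HasDerivAt (fun w => exp (-(c * w)) * φ w) 0 w := by
    intro w
    have hexp : HasDerivAt (fun w => exp (-(c * w))) (exp (-(c * w)) * -c) w := by
      simpa using ((hasDerivAt_id w).const_mul c).neg.cexp
    exact (hexp.mul (hφ w)).congr_deriv (by ring)
  have hconst := is_const_of_deriv_eq_zero (fun w => (hψ w).differentiableAt)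
    (fun w => (hψ w).deriv) z 0
  simp only [mul_zero, neg_zero, exp_zero, one_mul] at hconst
  rw [← hconst, ← mul_assoc, ← exp_add, add_neg_cancel, exp_zero, one_mul]

theorem apply_eq_exp_mul_of_hasDerivAt_flow {E : Type*} [NormedAddCommGroup E] [NormedSpace ℂ E]
    {f : E → ℂ} {γ : ℂ → E} {X : E → E} {c : ℂ} (hγ : ∀ z, HasDerivAt γ (X (γ z)) z)
    (hf : ∀ z, DifferentiableAt ℂ f (γ z)) (hX : ∀ z, fderiv ℂ f (γ z) (X (γ z)) = c * f (γ z))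
    (z : ℂ) : f (γ z) = exp (c * z) * f (γ 0) :=
  eq_exp_mul_of_hasDerivAt (fun w => hX w ▸ (hf w).hasFDerivAt.comp_hasDerivAt w (hγ w)) z

def mulExpE (U : Fin 2 → Fin 2 → ℂ) (z : ℂ) : Fin 2 → Fin 2 → ℂ :=
  fun i j => if j = 0 then U i 0 else U i 1 + z * U i 0

noncomputable def mulExpH (U : Fin 2 → Fin 2 → ℂ) (z : ℂ) : Fin 2 → Fin 2 → ℂ :=
  fun i j => if j = 0 then exp z * U i 0 else exp (-z) * U i 1

section Flows

variable (U : Fin 2 → Fin 2 → ℂ) (z : ℂ)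

@[simp] theorem mulExpE_zero : mulExpE U 0 = U := by
  funext i j; fin_cases j <;> simp [mulExpE]

@[simp] theorem mulExpH_zero : mulExpH U 0 = U := by
  funext i j; fin_cases j <;> simp [mulExpH]

@[simp] theorem det2_mulExpE : det2 (mulExpE U z) = det2 U := by
  simp only [det2, mulExpE, ↓reduceIte, one_ne_zero]
  ring

@[simp] theorem det2_mulExpH : det2 (mulExpH U z) = det2 U := by
  have h : exp z * exp (-z) = 1 := by rw [← exp_add, add_neg_cancel, exp_zero]
  simp only [det2, mulExpH, ↓reduceIte, one_ne_zero]
  linear_combination (U 0 0 * U 1 1 - U 0 1 * U 1 0) * h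

theorem hasDerivAt_mulExpE : HasDerivAt (mulExpE U) (dirE (mulExpE U z)) z := by
  refine hasDerivAt_pi.2 fun i => hasDerivAt_pi.2 fun j => ?_
  fin_cases j
  · simpa [mulExpE, dirE] using hasDerivAt_const z (U i 0)
  · simpa [mulExpE, dirE] using ((hasDerivAt_id z).mul_const (U i 0)).const_add (U i 1)

theorem hasDerivAt_mulExpH : HasDerivAt (mulExpH U) (dirH (mulExpH U z)) z := by
  refine hasDerivAt_pi.2 fun i => hasDerivAt_pi.2 fun j => ?_
  fin_cases j
  · simpa [mulExpH, dirH] using (hasDerivAt_exp z).mul_const (U i 0)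
  · simpa [mulExpH, dirH] using (hasDerivAt_neg z).cexp.mul_const (U i 1)

end Flows

section Charge

variable {f : (Fin 2 → Fin 2 → ℂ) → ℂ}

theorem apply_mulExpE (hf : ∀ U, det2 U = 1 → DifferentiableAt ℂ f U)
    (hE : ∀ U, det2 U = 1 → fderiv ℂ f U (dirE U) = 0) {U : Fin 2 → Fin 2 → ℂ}
    (hU : det2 U = 1) (z : ℂ) : f (mulExpE U z) = f U := by
  have hdet (w : ℂ) : det2 (mulExpE U w) = 1 := by rw [det2_mulExpE, hU]
  simpa using apply_eq_exp_mul_of_hasDerivAt_flow (c := 0) (hasDerivAt_mulExpE U)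
    (fun w => hf _ (hdet w)) (fun w => (hE _ (hdet w)).trans (zero_mul _).symm) z

theorem apply_mulExpH (hf : ∀ U, det2 U = 1 → DifferentiableAt ℂ f U)
    (hH : ∀ U, det2 U = 1 → fderiv ℂ f U (dirH U) = f U) {U : Fin 2 → Fin 2 → ℂ}
    (hU : det2 U = 1) (z : ℂ) : f (mulExpH U z) = exp z * f U := by
  have hdet (w : ℂ) : det2 (mulExpH U w) = 1 := by rw [det2_mulExpH, hU]
  simpa using apply_eq_exp_mul_of_hasDerivAt_flow (c := 1) (hasDerivAt_mulExpH U)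
    (fun w => hf _ (hdet w)) (fun w => (hH _ (hdet w)).trans (one_mul _).symm) z

theorem apply_eq_mul_of_col_zero_eq_mul (hf : ∀ U, det2 U = 1 → DifferentiableAt ℂ f U)
    (hE : ∀ U, det2 U = 1 → fderiv ℂ f U (dirE U) = 0)
    (hH : ∀ U, det2 U = 1 → fderiv ℂ f U (dirH U) = f U) ⦃U V : Fin 2 → Fin 2 → ℂ⦄
    (hU : det2 U = 1) (hV : det2 V = 1) {c : ℂ} (hc : c ≠ 0) (hUV : ∀ i, V i 0 = c * U i 0) :
    f V = c * f U := by
  obtain ⟨z, rfl⟩ : ∃ z, exp z = c := ⟨log c, exp_log hc⟩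
  have he : exp z * exp (-z) = 1 := by rw [← exp_add, add_neg_cancel, exp_zero]
  have hV' : exp z * (U 0 0 * V 1 1 - U 1 0 * V 0 1) = 1 := by
    rw [← hV, det2, hUV, hUV]; ring
  have hU' : U 0 0 * U 1 1 - U 0 1 * U 1 0 = 1 := hU
  -- `m` is the `(0,1)` entry of `U⁻¹ V = [[c, m], [0, c⁻¹]]`.
  set m := U 1 1 * V 0 1 - U 0 1 * V 1 1
  have hV_eq : mulExpE (mulExpH U z) (m * exp (-z)) = V := by
    funext i j
    fin_cases i <;> fin_cases j <;>
      simp only [mulExpE, mulExpH, hUV, Fin.zero_eta, Fin.mk_one, Fin.isValue, one_ne_zero,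
        ↓reduceIte]
    · linear_combination (m * U 0 0 + U 0 1 * (U 0 0 * V 1 1 - U 1 0 * V 0 1)) * he
        + V 0 1 * hU' - U 0 1 * exp (-z) * hV'
    · linear_combination (m * U 1 0 + U 1 1 * (U 0 0 * V 1 1 - U 1 0 * V 0 1)) * he
        + V 1 1 * hU' - U 1 1 * exp (-z) * hV'
  rw [← hV_eq, apply_mulExpE hf hE ((det2_mulExpH U z).trans hU), apply_mulExpH hf hH hU]

end Charge

theorem differentiable_fin_two_matrix {a b c d : ℂ → ℂ} (ha : Differentiable ℂ a)
    (hb : Differentiable ℂ b) (hc : Differentiable ℂ c) (hd : Differentiable ℂ d) :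
    Differentiable ℂ fun t => (![![a t, b t], ![c t, d t]] : Fin 2 → Fin 2 → ℂ) := by
  simp only [differentiable_pi, Fin.forall_fin_two]
  simp [ha, hb, hc, hd]

/-- Lemma 4.12 (ii) of the paper: a holomorphic function on a neighbourhood of
`SL(2,ℂ)` in `Mat(2,ℂ)` which is analytic (`∂₊₊ f = 0`) of charge `+1`
(`∂₀ f = f`) on `SL(2,ℂ)` is linear in the first column: `f = f₁ u₊¹ + f₂ u₊²`
with constants `f₁, f₂ ∈ ℂ`. -/
theorem global_charge_one_analytic_is_linear
    (O : Set (Fin 2 → Fin 2 → ℂ)) (hO : IsOpen O)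
    (hSL : {U : Fin 2 → Fin 2 → ℂ | det2 U = 1} ⊆ O)
    (f : (Fin 2 → Fin 2 → ℂ) → ℂ) (hf : DifferentiableOn ℂ f O)
    (hE : ∀ U : Fin 2 → Fin 2 → ℂ, det2 U = 1 → fderiv ℂ f U (dirE U) = 0)
    (hH : ∀ U : Fin 2 → Fin 2 → ℂ, det2 U = 1 → fderiv ℂ f U (dirH U) = f U) :
    ∃ f₁ f₂ : ℂ, ∀ U : Fin 2 → Fin 2 → ℂ, det2 U = 1 →
      f U = f₁ * U 0 0 + f₂ * U 1 0 := by
  have hfd (U) (hU : det2 U = 1) : DifferentiableAt ℂ f U :=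
    hf.differentiableAt (hO.mem_nhds (hSL hU))
  set L : ℂ → Fin 2 → Fin 2 → ℂ := fun t => ![![1, 0], ![t, 1]]
  set R : ℂ → Fin 2 → Fin 2 → ℂ := fun s => ![![s, -1], ![1, 0]]
  have hL (t : ℂ) : det2 (L t) = 1 := by simp [L, det2]
  have hR (s : ℂ) : det2 (R s) = 1 := by simp [R, det2]
  have hfL : Differentiable ℂ (f ∘ L) := fun t => (hfd _ (hL t)).comp t <|
    differentiable_fin_two_matrix (by fun_prop) (by fun_prop) (by fun_prop) (by fun_prop) t
  have hfR : ContinuousAt (f ∘ R) 0 := ((hfd _ (hR 0)).comp 0 <|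
    differentiable_fin_two_matrix (by fun_prop) (by fun_prop) (by fun_prop) (by fun_prop) 0)
      |>.continuousAt
  have hcol := apply_eq_mul_of_col_zero_eq_mul hfd hE hH
  have hLR (t : ℂ) (ht : t ≠ 0) : f (L t) = t * f (R t⁻¹) :=
    hcol (hR _) (hL t) ht (by simp [Fin.forall_fin_two, L, R, ht])
  have hlin (t : ℂ) : f (L t) = f (L 0) + t * f (R 0) :=
    eq_const_add_smul_of_eq_smul_comp_inv hfL hfR hLR t
  refine ⟨f (L 0), f (R 0), fun U hU => ?_⟩
  rcases eq_or_ne (U 0 0) 0 with h0 | h0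
  · have h1 : U 1 0 ≠ 0 := by rintro h1; simp [det2, h0, h1] at hU
    rw [hcol (hR 0) hU h1 (by simp [Fin.forall_fin_two, R, h0]), h0]
    ring
  · have hUL : ∀ i, U i 0 = U 0 0 * L (U 1 0 / U 0 0) i 0 := by
      simp [Fin.forall_fin_two, L, mul_div_cancel₀ _ h0]
    rw [hcol (hL _) hU h0 hUL, hlin]
    field_simp
end

section
/- Let O be an open subset of Mat(2,ℂ) contained in {U : U₁₀ ≠ 0}, and let f be a holomorphic (ℂ-differentiable) function on O such that for every U ∈ O with det U = 1 one has (∂₊₊ f)(U) = 0 and (∂₀ f)(U) = 0. Then on SL(2,ℂ) the function f locally factors through the quotient coordinate c = u₊¹/u₊² of the right Borel action: for every U⁰ ∈ O with det U⁰ = 1 there exist an open neighborhood V ⊆ O of U⁰ and a holomorphic function g defined on an open subset of ℂ containing U⁰₀₀/U⁰₁₀ such that f(U) = g(U₀₀/U₁₀) for all U ∈ V with det U = 1. -/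
open Metric

noncomputable def borelChart (c : ℂ) (q : ℂ × ℂ) : Fin 2 → Fin 2 → ℂ :=
  ![![c * q.1, c * q.2 - q.1⁻¹], ![q.1, q.2]]

lemma borelChart_div_apply {U : Fin 2 → Fin 2 → ℂ} (ht : U 1 0 ≠ 0) (hdet : det2 U = 1) :
    borelChart (U 0 0 / U 1 0) (U 1 0, U 1 1) = U := by
  unfold det2 at hdet
  ext i j
  fin_cases i <;> fin_cases j <;>
    simp only [borelChart, Matrix.cons_val', Matrix.cons_val_zero, Matrix.cons_val_one,
      Matrix.cons_val_fin_one, Fin.isValue, Fin.zero_eta, Fin.mk_one]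
  · field_simp
  · field_simp
    linear_combination hdet

lemma det2_borelChart (c : ℂ) {q : ℂ × ℂ} (ht : q.1 ≠ 0) : det2 (borelChart c q) = 1 := by
  simp only [det2, borelChart, Matrix.cons_val_zero, Matrix.cons_val_one, Matrix.cons_val_fin_one]
  field_simp
  ring

lemma differentiableAt_uncurry_borelChart {p : ℂ × ℂ × ℂ} (ht : p.2.1 ≠ 0) :
    DifferentiableAt ℂ (Function.uncurry borelChart) p := by
  refine differentiableAt_pi.2 fun i => differentiableAt_pi.2 fun j => ?_
  fin_cases i <;> fin_cases j <;>
    simp only [borelChart, Function.uncurry_def, Matrix.cons_val', Matrix.cons_val_zero,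
      Matrix.cons_val_one, Matrix.cons_val_fin_one, Fin.isValue, Fin.zero_eta, Fin.mk_one] <;>
    fun_prop (disch := assumption)

lemma differentiableAt_borelChart (c : ℂ) {q : ℂ × ℂ} (ht : q.1 ≠ 0) :
    DifferentiableAt ℂ (borelChart c) q :=
  (differentiableAt_uncurry_borelChart (p := (c, q)) ht).comp q
    ((differentiableAt_const c).prodMk differentiableAt_id)

lemma fderiv_borelChart_apply (c : ℂ) {q : ℂ × ℂ} (ht : q.1 ≠ 0) (w : ℂ × ℂ) :
    fderiv ℂ (borelChart c) q w = (w.1 * q.1⁻¹) • dirH (borelChart c q) +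
      (w.1 * q.2 * (q.1 ^ 2)⁻¹ + w.2 * q.1⁻¹) • dirE (borelChart c q) := by
  have hsplit : ∀ q', borelChart c q' = q'.1 • ![![c, 0], ![1, 0]] + q'.2 • ![![0, c], ![0, 1]] -
      q'.1⁻¹ • ![![0, 1], ![0, 0]] := fun q' => by
    ext i j
    fin_cases i <;> fin_cases j <;> simp [borelChart, mul_comm]
  have hderiv := ((((hasFDerivAt_fst (𝕜 := ℂ) (p := q)).smul_const ![![c, 0], ![1, 0]]).add
    (hasFDerivAt_snd.smul_const ![![0, c], ![0, 1]])).sub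
    (((hasDerivAt_inv ht).comp_hasFDerivAt q hasFDerivAt_fst).smul_const
      ![![(0 : ℂ), 1], ![0, 0]])).congr_of_eventuallyEq (.of_forall hsplit)
  rw [hderiv.fderiv]
  ext i j
  fin_cases i <;> fin_cases j <;>
    simp only [sub_apply, add_apply, smul_apply, ContinuousLinearMap.smulRight_apply,
      ContinuousLinearMap.coe_fst', ContinuousLinearMap.coe_snd', Pi.add_apply, Pi.sub_apply,
      Pi.smul_apply, smul_eq_mul, dirE, dirH, borelChart, Matrix.cons_val', Matrix.cons_val_zero,
      Matrix.cons_val_one, Matrix.cons_val_fin_one, Fin.isValue, Fin.zero_eta, Fin.mk_one,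
      one_ne_zero, zero_ne_one, ↓reduceIte] <;>
    field_simp <;> ring

lemma hasFDerivAt_comp_borelChart_zero {f : (Fin 2 → Fin 2 → ℂ) → ℂ} {c : ℂ} {q : ℂ × ℂ}
    (ht : q.1 ≠ 0) (hf : DifferentiableAt ℂ f (borelChart c q))
    (hE : fderiv ℂ f (borelChart c q) (dirE (borelChart c q)) = 0)
    (hH : fderiv ℂ f (borelChart c q) (dirH (borelChart c q)) = 0) :
    HasFDerivAt (fun q => f (borelChart c q)) (0 : ℂ × ℂ →L[ℂ] ℂ) q := by
  refine (hf.hasFDerivAt.comp q (differentiableAt_borelChart c ht).hasFDerivAt).congr_fderiv ?_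
  ext <;> simp [fderiv_borelChart_apply c ht, hE, hH]

lemma comp_borelChart_eq_of_isPreconnected {O : Set (Fin 2 → Fin 2 → ℂ)} (hO : IsOpen O)
    {f : (Fin 2 → Fin 2 → ℂ) → ℂ} (hf : DifferentiableOn ℂ f O)
    (hE : ∀ U ∈ O, det2 U = 1 → fderiv ℂ f U (dirE U) = 0)
    (hH : ∀ U ∈ O, det2 U = 1 → fderiv ℂ f U (dirH U) = 0)
    {c : ℂ} {s : Set (ℂ × ℂ)} (hs : IsOpen s) (hs' : IsPreconnected s)
    (hsO : ∀ q ∈ s, q.1 ≠ 0 ∧ borelChart c q ∈ O) {q q' : ℂ × ℂ} (hq : q ∈ s) (hq' : q' ∈ s) :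
    f (borelChart c q) = f (borelChart c q') := by
  have hderiv : ∀ q ∈ s, HasFDerivAt (fun q => f (borelChart c q)) 0 q := fun q hq =>
    have ⟨ht, hU⟩ := hsO q hq
    hasFDerivAt_comp_borelChart_zero ht (hf.differentiableAt (hO.mem_nhds hU))
      (hE _ hU (det2_borelChart c ht)) (hH _ hU (det2_borelChart c ht))
  exact hs.is_const_of_fderiv_eq_zero hs'
    (fun q hq => (hderiv q hq).differentiableAt.differentiableWithinAt)
    (fun q hq => (hderiv q hq).fderiv) hq hq'

lemma exists_ball_borelChart_mem {O : Set (Fin 2 → Fin 2 → ℂ)} (hO : IsOpen O) {c₀ : ℂ}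
    {q₀ : ℂ × ℂ} (ht : q₀.1 ≠ 0) (hU : borelChart c₀ q₀ ∈ O) :
    ∃ r > 0, ∀ c ∈ ball c₀ r, ∀ q ∈ ball q₀ r, q.1 ≠ 0 ∧ borelChart c q ∈ O := by
  have hev : ∀ᶠ p in nhds (c₀, q₀), p.2.1 ≠ 0 ∧ Function.uncurry borelChart p ∈ O :=
    ((continuous_snd.fst.continuousAt (x := (c₀, q₀))).eventually_ne ht).and
      ((differentiableAt_uncurry_borelChart ht).continuousAt.preimage_mem_nhds (hO.mem_nhds hU))
  obtain ⟨r, hr, h⟩ := eventually_nhds_iff_ball.1 hev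
  exact ⟨r, hr, fun c hc q hq => h (c, q) (ball_prod_same c₀ q₀ r ▸ ⟨hc, hq⟩)⟩

/-- The key step in the proof of Lemma 4.12 (i) of the paper: a holomorphic
function on an open subset of `{U : u₊² ≠ 0} ⊆ Mat(2,ℂ)` satisfying
`∂₊₊ f = ∂₀ f = 0` on `SL(2,ℂ)` locally factors through the quotient coordinate
`c = u₊¹/u₊²` of the right Borel action: `f = g(u₊¹/u₊²)` for a holomorphic `g`. -/
theorem charge_zero_analytic_factors_through_c
    (O : Set (Fin 2 → Fin 2 → ℂ)) (hO : IsOpen O)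
    (hO' : O ⊆ {U : Fin 2 → Fin 2 → ℂ | U 1 0 ≠ 0})
    (f : (Fin 2 → Fin 2 → ℂ) → ℂ) (hf : DifferentiableOn ℂ f O)
    (hE : ∀ U ∈ O, det2 U = 1 → fderiv ℂ f U (dirE U) = 0)
    (hH : ∀ U ∈ O, det2 U = 1 → fderiv ℂ f U (dirH U) = 0) :
    ∀ U₀ ∈ O, det2 U₀ = 1 →
      ∃ V : Set (Fin 2 → Fin 2 → ℂ), V ⊆ O ∧ IsOpen V ∧ U₀ ∈ V ∧
      ∃ W : Set ℂ, IsOpen W ∧ U₀ 0 0 / U₀ 1 0 ∈ W ∧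
      ∃ g : ℂ → ℂ, DifferentiableOn ℂ g W ∧
        ∀ U ∈ V, det2 U = 1 → f U = g (U 0 0 / U 1 0) := by
  intro U₀ hU₀ hdet₀
  set c₀ := U₀ 0 0 / U₀ 1 0
  set q₀ : ℂ × ℂ := (U₀ 1 0, U₀ 1 1)
  have ht₀ : q₀.1 ≠ 0 := hO' hU₀
  obtain ⟨r, hr, hball⟩ :=
    exists_ball_borelChart_mem hO ht₀ ((borelChart_div_apply ht₀ hdet₀).symm ▸ hU₀)
  have hcoords : ContinuousOn (fun U : Fin 2 → Fin 2 → ℂ => (U 0 0 / U 1 0, U 1 0, U 1 1)) O := by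
    fun_prop (disch := exact fun U hU => hO' hU)
  refine ⟨{U ∈ O | U 0 0 / U 1 0 ∈ ball c₀ r ∧ (U 1 0, U 1 1) ∈ ball q₀ r}, Set.sep_subset _ _,
    hcoords.isOpen_inter_preimage hO (isOpen_ball.prod isOpen_ball),
    ⟨hU₀, mem_ball_self hr, mem_ball_self hr⟩, ball c₀ r, isOpen_ball, mem_ball_self hr,
    fun c => f (borelChart c q₀), fun c hc => ?_, ?_⟩
  · have ⟨ht, hU⟩ := hball c hc q₀ (mem_ball_self hr)
    have hchart := (differentiableAt_uncurry_borelChart (p := (c, q₀)) ht).comp c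
      ((differentiableAt_id (𝕜 := ℂ)).prodMk (differentiableAt_const q₀))
    exact ((hf.differentiableAt (hO.mem_nhds hU)).comp c hchart).differentiableWithinAt
  · rintro U ⟨hUO, hc, hq⟩ hdet
    calc f U = f (borelChart (U 0 0 / U 1 0) (U 1 0, U 1 1)) := by
          rw [borelChart_div_apply (hO' hUO) hdet]
      _ = f (borelChart (U 0 0 / U 1 0) q₀) :=
          comp_borelChart_eq_of_isPreconnected hO hf hE hH isOpen_ball
            (convex_ball q₀ r).isPreconnected (hball _ hc) hq (mem_ball_self hr)
end

section
/- Let O be an open subset of Mat(2,ℂ) contained in {U : U₁₀ ≠ 0}, and let f₊ be a holomorphic (ℂ-differentiable) function on O such that for every U ∈ O with det U = 1 one has (∂₊₊ f₊)(U) = 0 and (∂₀ f₊)(U) = f₊(U). Then locally on SL(2,ℂ) the function f₊ has the form f₊ = u₊^α f_α(u₊¹/u₊²): for every U⁰ ∈ O with det U⁰ = 1 there exist an open neighborhood V ⊆ O of U⁰ and holomorphic functions f₁, f₂ defined on an open subset of ℂ containing U⁰₀₀/U⁰₁₀ such that f₊(U) = U₀₀ · f₁(U₀₀/U₁₀) +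 U₁₀ · f₂(U₀₀/U₁₀) for all U ∈ V with det U = 1. -/
open Metric

theorem IsOpen.eq_of_hasDerivAt_eq_zero {𝕜 G : Type*} [RCLike 𝕜] [NormedAddCommGroup G]
    [NormedSpace 𝕜 G] {g : 𝕜 → G} {s : Set 𝕜} (hs : IsOpen s) (hs' : IsPreconnected s)
    (hg : ∀ x ∈ s, HasDerivAt g 0 x) {x y : 𝕜} (hx : x ∈ s) (hy : y ∈ s) : g x = g y :=
  hs.is_const_of_deriv_eq_zero hs' (fun x hx => (hg x hx).differentiableAt.differentiableWithinAt)
    (fun x hx => (hg x hx).deriv) hx hy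

noncomputable def slChart (z s d : ℂ) : Fin 2 → Fin 2 → ℂ :=
  ![![s * z, z * d - s⁻¹], ![s, d]]

lemma det2_slChart (z : ℂ) {s : ℂ} (d : ℂ) (hs : s ≠ 0) : det2 (slChart z s d) = 1 := by
  simp [det2, slChart, field]

lemma slChart_eq_self {U : Fin 2 → Fin 2 → ℂ} (hU : det2 U = 1) (h : U 1 0 ≠ 0) :
    slChart (U 0 0 / U 1 0) (U 1 0) (U 1 1) = U := by
  unfold det2 at hU
  ext i j
  fin_cases i <;> fin_cases j <;> simp [slChart] <;> field_simp
  linear_combination hU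

lemma differentiableAt_slChart {p : ℂ × ℂ × ℂ} (hp : p.2.1 ≠ 0) :
    DifferentiableAt ℂ (fun p : ℂ × ℂ × ℂ => slChart p.1 p.2.1 p.2.2) p := by
  refine differentiableAt_pi.2 fun i => differentiableAt_pi.2 fun j => ?_
  fin_cases i <;> fin_cases j <;> simp [slChart] <;> fun_prop (disch := exact hp)

lemma hasDerivAt_slChart_right (z : ℂ) {s : ℂ} (d : ℂ) (hs : s ≠ 0) :
    HasDerivAt (slChart z s) (s⁻¹ • dirE (slChart z s d)) d := by
  refine hasDerivAt_pi.2 fun i => hasDerivAt_pi.2 fun j => ?_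
  fin_cases i <;> fin_cases j <;> simp [slChart, dirE, hs]
  exacts [hasDerivAt_const _ _, by simpa using (hasDerivAt_id d).const_mul z,
    hasDerivAt_const _ _, hasDerivAt_id d]

lemma hasDerivAt_slChart_mid (z : ℂ) {s : ℂ} (d : ℂ) (hs : s ≠ 0) :
    HasDerivAt (fun s => slChart z s d)
      (s⁻¹ • (dirH (slChart z s d) + (d / s) • dirE (slChart z s d))) s := by
  refine hasDerivAt_pi.2 fun i => hasDerivAt_pi.2 fun j => ?_
  fin_cases i <;> fin_cases j <;> simp [slChart, dirE, dirH, hs]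
  · simpa using (hasDerivAt_id s).mul_const z
  · convert (hasDerivAt_inv hs).const_sub (z * d) using 1
    field_simp
    ring
  · exact hasDerivAt_id s
  · exact hasDerivAt_const _ _

section

variable {O : Set (Fin 2 → Fin 2 → ℂ)} {f : (Fin 2 → Fin 2 → ℂ) → ℂ} {z s d : ℂ}

lemma hasDerivAt_comp_slChart_right (hs : s ≠ 0) (hf : DifferentiableAt ℂ f (slChart z s d))
    (hE : fderiv ℂ f (slChart z s d) (dirE (slChart z s d)) = 0) :
    HasDerivAt (fun d => f (slChart z s d)) 0 d := by
  simpa [hE, Function.comp_def] using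
    hf.hasFDerivAt.comp_hasDerivAt d (hasDerivAt_slChart_right z d hs)

lemma hasDerivAt_comp_slChart_mid_div (hs : s ≠ 0) (hf : DifferentiableAt ℂ f (slChart z s d))
    (hE : fderiv ℂ f (slChart z s d) (dirE (slChart z s d)) = 0)
    (hH : fderiv ℂ f (slChart z s d) (dirH (slChart z s d)) = f (slChart z s d)) :
    HasDerivAt (fun s => f (slChart z s d) / s) 0 s := by
  have hcomp := hf.hasFDerivAt.comp_hasDerivAt s (hasDerivAt_slChart_mid z d hs)
  simp only [map_smul, map_add, hE, hH, smul_eq_mul, mul_zero, add_zero] at hcomp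
  exact (hcomp.div (hasDerivAt_id' s) hs).congr_deriv (by simp [field])

lemma comp_slChart_eq_mul_of_mem_polydisc (hO : IsOpen O) (hO' : O ⊆ {U | U 1 0 ≠ 0})
    (hf : DifferentiableOn ℂ f O)
    (hE : ∀ U ∈ O, det2 U = 1 → fderiv ℂ f U (dirE U) = 0)
    (hH : ∀ U ∈ O, det2 U = 1 → fderiv ℂ f U (dirH U) = f U)
    {z₀ c₀ d₀ : ℂ} {r : ℝ}
    (hB : ball z₀ r ×ˢ ball c₀ r ×ˢ ball d₀ r ⊆
      (fun p : ℂ × ℂ × ℂ => slChart p.1 p.2.1 p.2.2) ⁻¹' O)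
    (hz : z ∈ ball z₀ r) (hs : s ∈ ball c₀ r) (hd : d ∈ ball d₀ r) :
    f (slChart z s d) = s * (f (slChart z c₀ d₀) / c₀) := by
  have hmem : ∀ s ∈ ball c₀ r, ∀ d ∈ ball d₀ r, slChart z s d ∈ O :=
    fun s hs d hd => @hB (z, s, d) ⟨hz, hs, hd⟩
  have hne : ∀ s ∈ ball c₀ r, s ≠ 0 := fun s hs => hO' (hmem s hs d hd)
  have hdiff : ∀ s ∈ ball c₀ r, ∀ d ∈ ball d₀ r, DifferentiableAt ℂ f (slChart z s d) :=
    fun s hs d hd => hf.differentiableAt (hO.mem_nhds (hmem s hs d hd))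
  have hE' : ∀ s ∈ ball c₀ r, ∀ d ∈ ball d₀ r,
      fderiv ℂ f (slChart z s d) (dirE (slChart z s d)) = 0 :=
    fun s hs d hd => hE _ (hmem s hs d hd) (det2_slChart z d (hne s hs))
  have hH' : ∀ s ∈ ball c₀ r, ∀ d ∈ ball d₀ r,
      fderiv ℂ f (slChart z s d) (dirH (slChart z s d)) = f (slChart z s d) :=
    fun s hs d hd => hH _ (hmem s hs d hd) (det2_slChart z d (hne s hs))
  have hr : 0 < r := pos_of_mem_ball hs
  have h_d : f (slChart z s d) = f (slChart z s d₀) :=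
    isOpen_ball.eq_of_hasDerivAt_eq_zero (convex_ball d₀ r).isPreconnected
      (fun d' hd' =>
        hasDerivAt_comp_slChart_right (hne s hs) (hdiff s hs d' hd') (hE' s hs d' hd'))
      hd (mem_ball_self hr)
  have h_s : f (slChart z s d₀) / s = f (slChart z c₀ d₀) / c₀ :=
    isOpen_ball.eq_of_hasDerivAt_eq_zero (convex_ball c₀ r).isPreconnected
      (fun s' hs' => hasDerivAt_comp_slChart_mid_div (hne s' hs')
        (hdiff s' hs' d₀ (mem_ball_self hr)) (hE' s' hs' d₀ (mem_ball_self hr))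
        (hH' s' hs' d₀ (mem_ball_self hr)))
      hs (mem_ball_self hr)
  rw [h_d, ← h_s, mul_div_cancel₀ _ (hne s hs)]

end

/-- Lemma 4.12 (i) of the paper: a holomorphic function `f₊` on an open subset of
`{U : u₊² ≠ 0} ⊆ Mat(2,ℂ)` satisfying `∂₊₊ f₊ = 0` and `∂₀ f₊ = f₊` on `SL(2,ℂ)`
locally has the form `f₊ = u₊¹ f₁(u₊¹/u₊²) + u₊² f₂(u₊¹/u₊²)` with `f₁, f₂`
holomorphic. -/
theorem local_charge_one_analytic_form
    (O : Set (Fin 2 → Fin 2 → ℂ)) (hO : IsOpen O)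
    (hO' : O ⊆ {U : Fin 2 → Fin 2 → ℂ | U 1 0 ≠ 0})
    (f : (Fin 2 → Fin 2 → ℂ) → ℂ) (hf : DifferentiableOn ℂ f O)
    (hE : ∀ U ∈ O, det2 U = 1 → fderiv ℂ f U (dirE U) = 0)
    (hH : ∀ U ∈ O, det2 U = 1 → fderiv ℂ f U (dirH U) = f U) :
    ∀ U₀ ∈ O, det2 U₀ = 1 →
      ∃ V : Set (Fin 2 → Fin 2 → ℂ), V ⊆ O ∧ IsOpen V ∧ U₀ ∈ V ∧
      ∃ W : Set ℂ, IsOpen W ∧ U₀ 0 0 / U₀ 1 0 ∈ W ∧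
      ∃ f₁ f₂ : ℂ → ℂ, DifferentiableOn ℂ f₁ W ∧ DifferentiableOn ℂ f₂ W ∧
        ∀ U ∈ V, det2 U = 1 →
          f U = U 0 0 * f₁ (U 0 0 / U 1 0) + U 1 0 * f₂ (U 0 0 / U 1 0) := by
  intro U₀ hU₀ hdet₀
  set z₀ := U₀ 0 0 / U₀ 1 0
  set c₀ := U₀ 1 0
  set d₀ := U₀ 1 1
  have hc₀ : c₀ ≠ 0 := hO' hU₀
  let coords : (Fin 2 → Fin 2 → ℂ) → ℂ × ℂ × ℂ := fun U => (U 0 0 / U 1 0, U 1 0, U 1 1)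
  obtain ⟨r, hr, hB⟩ : ∃ r > 0, ball (z₀, c₀, d₀) r ⊆
      (fun p : ℂ × ℂ × ℂ => slChart p.1 p.2.1 p.2.2) ⁻¹' O := by
    refine mem_nhds_iff.1 <| (differentiableAt_slChart hc₀).continuousAt.preimage_mem_nhds ?_
    rw [slChart_eq_self hdet₀ hc₀]
    exact hO.mem_nhds hU₀
  rw [← ball_prod_same, ← ball_prod_same] at hB
  have hcoords : ContinuousOn coords O := by
    fun_prop (disch := exact fun U hU => hO' hU)
  refine ⟨O ∩ coords ⁻¹' ball (z₀, c₀, d₀) r, Set.inter_subset_left,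
    hcoords.isOpen_inter_preimage hO isOpen_ball, ⟨hU₀, mem_ball_self hr⟩,
    ball z₀ r, isOpen_ball, mem_ball_self hr,
    0, fun z => f (slChart z c₀ d₀) / c₀, differentiableOn_const 0, ?_, ?_⟩
  · refine DifferentiableOn.div_const (hf.comp (fun z _ => ?_) fun z hz => ?_) c₀
    · exact ((differentiableAt_slChart (p := (z, c₀, d₀)) hc₀).comp z
        (f := fun z => (z, c₀, d₀)) (by fun_prop)).differentiableWithinAt
    · exact @hB (z, c₀, d₀) ⟨hz, mem_ball_self hr, mem_ball_self hr⟩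
  · rintro U ⟨hUO, hUcoords⟩ hdet
    rw [← ball_prod_same, ← ball_prod_same] at hUcoords
    obtain ⟨hz, hs, hd⟩ := hUcoords
    have hform := comp_slChart_eq_mul_of_mem_polydisc hO hO' hf hE hH hB hz hs hd
    rw [slChart_eq_self hdet (hO' hUO)] at hform
    simpa using hform
end

section
/- Let f be a holomorphic (ℂ-differentiable) function defined on an open subset O of Mat(2,ℂ) containing all of SL(2,ℂ), and suppose that for every U ∈ SL(2,ℂ) one has (∂₊₊ f)(U) = 0 and (∂₀ f)(U) = 3 f(U) (i.e. f is analytic of charge +3). Then f is a homogeneous cubic polynomial in the entries of the first column of U on SL(2,ℂ): there exist constants c₀, c₁, c₂, c₃ ∈ ℂ such that f(U) = c₀·U₀₀³ + c₁·U₀₀²·U₁₀ + c₂·U₀₀·U₁₀² + c₃·U₁₀³ for all U ∈ SL(2,ℂ). -/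
open Complex Polynomial

theorem eq_exp_mul_of_hasDerivAt_mul_self {F : ℂ → ℂ} {c : ℂ}
    (hF : ∀ s, HasDerivAt F (c * F s) s) (s : ℂ) : F s = exp (c * s) * F 0 := by
  have hG : ∀ s, HasDerivAt (fun s => exp (-(c * s)) * F s) 0 s := fun s => by
    have hexp := ((hasDerivAt_id s).const_mul c).neg.cexp
    exact (hexp.mul (hF s)).congr_deriv (by simp only [id]; ring)
  have hconst := is_const_of_deriv_eq_zero (fun s => (hG s).differentiableAt)
    (fun s => (hG s).deriv) s 0
  simp only [mul_zero, neg_zero, exp_zero, one_mul] at hconst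
  rw [← hconst, ← mul_assoc, ← exp_add, add_neg_cancel, exp_zero, one_mul]

theorem norm_dslope_zero_le {g : ℂ → ℂ} {K : ℝ} {n : ℕ}
    (hg : ∀ z : ℂ, 1 ≤ ‖z‖ → ‖g z‖ ≤ K * ‖z‖ ^ (n + 1)) {z : ℂ} (hz : 1 ≤ ‖z‖) :
    ‖dslope g 0 z‖ ≤ (K + ‖g 0‖) * ‖z‖ ^ n := by
  have hzpos : 0 < ‖z‖ := by linarith
  rw [dslope_of_ne _ (norm_pos_iff.mp hzpos), slope_def_field, sub_zero, norm_div,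
    div_le_iff₀ hzpos]
  calc ‖g z - g 0‖ ≤ K * ‖z‖ ^ (n + 1) + ‖g 0‖ * 1 := by
        linarith [norm_sub_le (g z) (g 0), hg z hz]
    _ ≤ K * ‖z‖ ^ (n + 1) + ‖g 0‖ * ‖z‖ ^ (n + 1) := by
        gcongr; exact one_le_pow₀ hz
    _ = (K + ‖g 0‖) * ‖z‖ ^ n * ‖z‖ := by ring

theorem Differentiable.exists_polynomial_of_norm_le_mul_pow {g : ℂ → ℂ}
    (hg : Differentiable ℂ g) {K : ℝ} {n : ℕ}
    (hbound : ∀ z : ℂ, 1 ≤ ‖z‖ → ‖g z‖ ≤ K * ‖z‖ ^ n) :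
    ∃ p : ℂ[X], p.natDegree ≤ n ∧ ∀ z, g z = p.eval z := by
  induction n generalizing g K with
  | zero =>
    obtain ⟨M, hM⟩ := (isCompact_closedBall (0 : ℂ) 1).exists_bound_of_continuousOn
      hg.continuous.continuousOn
    have hbdd : Bornology.IsBounded (Set.range g) := by
      refine isBounded_iff_forall_norm_le.2 ⟨max K M, ?_⟩
      rintro _ ⟨z, rfl⟩
      rcases le_total 1 ‖z‖ with hz | hz
      · simpa using (hbound z hz).trans (le_max_left _ _)
      · exact (hM z (by simpa using hz)).trans (le_max_right _ _)
    exact ⟨C (g 0), by simp, fun z => by simpa using hg.apply_eq_apply_of_bounded hbdd z 0⟩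
  | succ n ih =>
    have hslope : Differentiable ℂ (dslope g 0) := fun z =>
      ((differentiableOn_dslope Filter.univ_mem).2 hg.differentiableOn).differentiableAt
        Filter.univ_mem
    obtain ⟨q, hq, hgq⟩ := ih hslope (fun z hz => norm_dslope_zero_le hbound hz)
    refine ⟨C (g 0) + X * q, ?_, fun z => ?_⟩
    · rw [natDegree_C_add]
      exact natDegree_mul_le.trans (by rw [natDegree_X]; omega)
    · have := sub_smul_dslope g 0 z
      rw [sub_zero, smul_eq_mul, hgq] at this
      simp only [eval_add, eval_C, eval_mul, eval_X]
      linear_combination -this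

theorem exists_norm_le_mul_pow_of_eq_pow_mul_inv {g h : ℂ → ℂ}
    (hh : ContinuousOn h (Metric.closedBall 0 1)) (n : ℕ)
    (hgh : ∀ z ≠ 0, g z = z ^ n * h z⁻¹) :
    ∃ C, ∀ z : ℂ, 1 ≤ ‖z‖ → ‖g z‖ ≤ C * ‖z‖ ^ n := by
  obtain ⟨C, hC⟩ := (isCompact_closedBall (0 : ℂ) 1).exists_bound_of_continuousOn hh
  refine ⟨C, fun z hz => ?_⟩
  have hz0 : z ≠ 0 := norm_pos_iff.mp (by linarith)
  have hinv : z⁻¹ ∈ Metric.closedBall (0 : ℂ) 1 := by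
    simpa using inv_le_one_of_one_le₀ hz
  rw [hgh z hz0, norm_mul, norm_pow, mul_comm]
  gcongr
  exact hC _ hinv

theorem Polynomial.eval_reflect_eq_pow_mul_eval_inv {K : Type*} [Field K] {p : K[X]} {n : ℕ}
    (hp : p.natDegree ≤ n) {w : K} (hw : w ≠ 0) : (reflect n p).eval w = w ^ n * p.eval w⁻¹ := by
  let := invertibleOfNonzero (inv_ne_zero hw)
  have := eval₂_reflect_mul_pow (RingHom.id K) w⁻¹ n p hp
  rw [invOf_eq_inv, inv_inv] at this
  rw [eval, eval, ← this, inv_pow, mul_comm, inv_mul_cancel_right₀ (pow_ne_zero _ hw)]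

theorem Continuous.apply_zero_eq_coeff_of_eq_pow_mul_eval_inv {h : ℂ → ℂ} (hh : Continuous h)
    {p : ℂ[X]} {n : ℕ} (hp : p.natDegree ≤ n) (hhp : ∀ w ≠ 0, h w = w ^ n * p.eval w⁻¹) :
    h 0 = p.coeff n := by
  have heq : h = fun w => (reflect n p).eval w :=
    hh.ext_on (dense_compl_singleton 0) (Polynomial.continuous _) fun w hw =>
      (hhp w hw).trans (eval_reflect_eq_pow_mul_eval_inv hp hw).symm
  simp only [heq]
  rw [← coeff_zero_eq_eval_zero, coeff_reflect, revAt_le (Nat.zero_le n), Nat.sub_zero]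

theorem Polynomial.eval_eq_of_natDegree_le_three {R : Type*} [Semiring R] {p : R[X]}
    (hp : p.natDegree ≤ 3) (z : R) :
    p.eval z = p.coeff 0 + p.coeff 1 * z + p.coeff 2 * z ^ 2 + p.coeff 3 * z ^ 3 := by
  rw [eval_eq_sum_range' (n := 4) (by omega)]
  simp [Finset.sum_range_succ]

/-- `U · [[1, t], [0, 1]]` -/
def shearRight (U : Fin 2 → Fin 2 → ℂ) (t : ℂ) : Fin 2 → Fin 2 → ℂ :=
  fun i => ![U i 0, U i 1 + t * U i 0]

/-- `U · diag(λ, λ⁻¹)` -/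
noncomputable def scaleRight (lam : ℂ) (U : Fin 2 → Fin 2 → ℂ) : Fin 2 → Fin 2 → ℂ :=
  fun i => ![lam * U i 0, lam⁻¹ * U i 1]

@[simp]
theorem shearRight_zero (U : Fin 2 → Fin 2 → ℂ) : shearRight U 0 = U := by
  funext i j
  fin_cases j <;> simp [shearRight]

@[simp]
theorem scaleRight_one (U : Fin 2 → Fin 2 → ℂ) : scaleRight 1 U = U := by
  funext i j
  fin_cases j <;> simp [scaleRight]

theorem det2_shearRight (U : Fin 2 → Fin 2 → ℂ) (t : ℂ) : det2 (shearRight U t) = det2 U := by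
  simp only [det2, shearRight, Matrix.cons_val_zero, Matrix.cons_val_one]
  ring

theorem det2_scaleRight {lam : ℂ} (hlam : lam ≠ 0) (U : Fin 2 → Fin 2 → ℂ) :
    det2 (scaleRight lam U) = det2 U := by
  simp only [det2, scaleRight, Matrix.cons_val_zero, Matrix.cons_val_one]
  field_simp

theorem hasDerivAt_shearRight (U : Fin 2 → Fin 2 → ℂ) (t : ℂ) :
    HasDerivAt (shearRight U) (dirE (shearRight U t)) t := by
  refine hasDerivAt_pi.2 fun i => hasDerivAt_pi.2 fun j => ?_
  fin_cases j
  · simpa [shearRight, dirE] using hasDerivAt_const t (U i 0)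
  · simpa [shearRight, dirE] using ((hasDerivAt_id t).mul_const (U i 0)).const_add (U i 1)

theorem hasDerivAt_scaleRight_exp (U : Fin 2 → Fin 2 → ℂ) (s : ℂ) :
    HasDerivAt (fun s => scaleRight (exp s) U) (dirH (scaleRight (exp s) U)) s := by
  refine hasDerivAt_pi.2 fun i => hasDerivAt_pi.2 fun j => ?_
  fin_cases j
  · simpa [scaleRight, dirH] using (hasDerivAt_exp s).mul_const (U i 0)
  · simpa [scaleRight, dirH, ← exp_neg] using ((hasDerivAt_id s).neg.cexp).mul_const (U i 1)

def lowerUnitri (z : ℂ) : Fin 2 → Fin 2 → ℂ := ![![1, 0], ![z, 1]]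

def shearedWeyl (w : ℂ) : Fin 2 → Fin 2 → ℂ := ![![w, -1], ![1, 0]]

theorem det2_lowerUnitri (z : ℂ) : det2 (lowerUnitri z) = 1 := by simp [det2, lowerUnitri]

theorem det2_shearedWeyl (w : ℂ) : det2 (shearedWeyl w) = 1 := by simp [det2, shearedWeyl]

theorem differentiable_lowerUnitri : Differentiable ℂ lowerUnitri := by
  refine differentiable_pi.2 fun i => differentiable_pi.2 fun j => ?_
  fin_cases i <;> fin_cases j <;> simp [lowerUnitri, differentiable_const]

theorem differentiable_shearedWeyl : Differentiable ℂ shearedWeyl := by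
  refine differentiable_pi.2 fun i => differentiable_pi.2 fun j => ?_
  fin_cases i <;> fin_cases j <;> simp [shearedWeyl, differentiable_const]

section

variable {f : (Fin 2 → Fin 2 → ℂ) → ℂ} (hf : ∀ U, det2 U = 1 → DifferentiableAt ℂ f U)
  (hE : ∀ U, det2 U = 1 → fderiv ℂ f U (dirE U) = 0)
  (hH : ∀ U, det2 U = 1 → fderiv ℂ f U (dirH U) = 3 * f U)
include hf

include hE in
theorem apply_shearRight {U : Fin 2 → Fin 2 → ℂ} (hU : det2 U = 1) (t : ℂ) :
    f (shearRight U t) = f U := by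
  have hdet : ∀ s, det2 (shearRight U s) = 1 := fun s => (det2_shearRight U s).trans hU
  have hderiv : ∀ s, HasDerivAt (fun s => f (shearRight U s)) (0 * f (shearRight U s)) s :=
    fun s => by
      rw [zero_mul, ← hE _ (hdet s)]
      exact (hf _ (hdet s)).hasFDerivAt.comp_hasDerivAt s (hasDerivAt_shearRight U s)
  simpa [shearRight_zero] using eq_exp_mul_of_hasDerivAt_mul_self hderiv t

include hH in
theorem apply_scaleRight {U : Fin 2 → Fin 2 → ℂ} (hU : det2 U = 1) {lam : ℂ} (hlam : lam ≠ 0) :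
    f (scaleRight lam U) = lam ^ 3 * f U := by
  have hdet : ∀ s, det2 (scaleRight (exp s) U) = 1 :=
    fun s => (det2_scaleRight (exp_ne_zero s) U).trans hU
  have hderiv : ∀ s, HasDerivAt (fun s => f (scaleRight (exp s) U))
      (3 * f (scaleRight (exp s) U)) s := fun s => by
    rw [← hH _ (hdet s)]
    exact (hf _ (hdet s)).hasFDerivAt.comp_hasDerivAt s (hasDerivAt_scaleRight_exp U s)
  have := eq_exp_mul_of_hasDerivAt_mul_self hderiv (log lam)
  rw [exp_log hlam, exp_zero, scaleRight_one] at this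
  rw [this, ← Nat.cast_ofNat, exp_nat_mul, exp_log hlam]

include hE in
theorem apply_eq_of_firstCol_eq {U V : Fin 2 → Fin 2 → ℂ} (hU : det2 U = 1) (hV : det2 V = 1)
    (h0 : V 0 0 = U 0 0) (h1 : V 1 0 = U 1 0) : f V = f U := by
  -- `U⁻¹ V` is `[[1, t], [0, 1]]` for `t = (U⁻¹ V)₀₁`, as `U`, `V` share first column and det
  have hshear : V = shearRight U (U 1 1 * V 0 1 - U 0 1 * V 1 1) := by
    simp only [det2, h0, h1] at hU hV
    funext i j
    fin_cases i <;> fin_cases j <;> simp [shearRight, h0, h1]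
    · linear_combination U 0 1 * hV - V 0 1 * hU
    · linear_combination U 1 1 * hV - V 1 1 * hU
  rw [hshear]
  exact apply_shearRight hf hE hU _

include hE hH

theorem apply_eq_pow_three_mul_of_firstCol_eq_smul {U V : Fin 2 → Fin 2 → ℂ} (hU : det2 U = 1)
    (hV : det2 V = 1) {lam : ℂ} (hlam : lam ≠ 0)
    (h0 : U 0 0 = lam * V 0 0) (h1 : U 1 0 = lam * V 1 0) : f U = lam ^ 3 * f V := by
  rw [← apply_scaleRight hf hH hV hlam]
  exact apply_eq_of_firstCol_eq hf hE ((det2_scaleRight hlam V).trans hV) hU h0 h1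

theorem apply_eq_pow_three_mul_apply_lowerUnitri {U : Fin 2 → Fin 2 → ℂ} (hU : det2 U = 1)
    (ha : U 0 0 ≠ 0) :
    f U = U 0 0 ^ 3 * f (lowerUnitri (U 1 0 / U 0 0)) :=
  apply_eq_pow_three_mul_of_firstCol_eq_smul hf hE hH hU (det2_lowerUnitri _) ha
    (by simp [lowerUnitri]) (by simp [lowerUnitri]; field_simp)

theorem apply_eq_pow_three_mul_apply_shearedWeyl {U : Fin 2 → Fin 2 → ℂ} (hU : det2 U = 1)
    (hb : U 1 0 ≠ 0) :
    f U = U 1 0 ^ 3 * f (shearedWeyl (U 0 0 / U 1 0)) :=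
  apply_eq_pow_three_mul_of_firstCol_eq_smul hf hE hH hU (det2_shearedWeyl _) hb
    (by simp [shearedWeyl]; field_simp) (by simp [shearedWeyl])

end

/-- The function-theoretic content of Proposition 5.14 of the paper (the charge-3
analogue of Lemma 4.12 (ii)): a holomorphic function on a neighbourhood of
`SL(2,ℂ)` in `Mat(2,ℂ)` which is analytic (`∂₊₊ f = 0`) of charge `+3`
(`∂₀ f = 3f`) on `SL(2,ℂ)` is a homogeneous cubic polynomial in the entries
`u₊¹ = U₀₀`, `u₊² = U₁₀` of the first column of `U`. -/
theorem global_charge_three_analytic_is_cubic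
    (O : Set (Fin 2 → Fin 2 → ℂ)) (hO : IsOpen O)
    (hSL : {U : Fin 2 → Fin 2 → ℂ | det2 U = 1} ⊆ O)
    (f : (Fin 2 → Fin 2 → ℂ) → ℂ) (hf : DifferentiableOn ℂ f O)
    (hE : ∀ U : Fin 2 → Fin 2 → ℂ, det2 U = 1 → fderiv ℂ f U (dirE U) = 0)
    (hH : ∀ U : Fin 2 → Fin 2 → ℂ, det2 U = 1 → fderiv ℂ f U (dirH U) = 3 * f U) :
    ∃ c₀ c₁ c₂ c₃ : ℂ, ∀ U : Fin 2 → Fin 2 → ℂ, det2 U = 1 →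
      f U = c₀ * (U 0 0) ^ 3 + c₁ * (U 0 0) ^ 2 * U 1 0
          + c₂ * U 0 0 * (U 1 0) ^ 2 + c₃ * (U 1 0) ^ 3 := by
  have hfU : ∀ U, det2 U = 1 → DifferentiableAt ℂ f U :=
    fun U hU => hf.differentiableAt (hO.mem_nhds (hSL hU))
  have hg : Differentiable ℂ (f ∘ lowerUnitri) :=
    fun z => (hfU _ (det2_lowerUnitri z)).comp z (differentiable_lowerUnitri z)
  have hh : Differentiable ℂ (f ∘ shearedWeyl) :=
    fun w => (hfU _ (det2_shearedWeyl w)).comp w (differentiable_shearedWeyl w)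
  obtain ⟨K, hK⟩ := exists_norm_le_mul_pow_of_eq_pow_mul_inv hh.continuous.continuousOn 3
    fun z hz => by
      simpa [lowerUnitri] using
        apply_eq_pow_three_mul_apply_shearedWeyl hfU hE hH (det2_lowerUnitri z) hz
  obtain ⟨p, hp, hgp⟩ := hg.exists_polynomial_of_norm_le_mul_pow hK
  have hh0 : f (shearedWeyl 0) = p.coeff 3 :=
    hh.continuous.apply_zero_eq_coeff_of_eq_pow_mul_eval_inv hp fun w hw => by
      simpa [shearedWeyl, ← hgp] using
        apply_eq_pow_three_mul_apply_lowerUnitri hfU hE hH (det2_shearedWeyl w) hw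
  refine ⟨p.coeff 0, p.coeff 1, p.coeff 2, p.coeff 3, fun U hU => ?_⟩
  rcases eq_or_ne (U 0 0) 0 with ha | ha
  · have hb : U 1 0 ≠ 0 := fun hb => by simp [det2, ha, hb] at hU
    rw [apply_eq_pow_three_mul_apply_shearedWeyl hfU hE hH hU hb, ha, zero_div, hh0]
    ring
  · rw [apply_eq_pow_three_mul_apply_lowerUnitri hfU hE hH hU ha, ← Function.comp_apply (f := f),
      hgp, eval_eq_of_natDegree_le_three hp]
    field_simp
end

section
/- Let E and F be finite-dimensional complex vector spaces with dim E ≥ 2 and dim F ≥ 2, and let ω_E and ω_F be nondegenerate alternating bilinear forms on E and F respectively. Let Φ : (E ⊗ F)⁴ → ℂ be the 4-multilinear map determined on decomposable elements by Φ(e₁⊗f₁, e₂⊗f₂, e₃⊗f₃, e₄⊗f₄) = ω_E(e₁,e₂)·ω_E(e₃,e₄)·ω_F(f₁,f₃)·ω_F(f₂,f₄), and define the 4-form Ω on E ⊗ F as its alternation, Ω(x₁,x₂,x₃,x₄) := Σ_{σ ∈ S₄} sgn(σ)·Φ(x_{σ(1)}, x_{σ(2)}, x_{σ(3)}, x_{σ(4)}).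 Then Ω is a nonzero alternating 4-linear form on E ⊗ F; moreover Ω is invariant under Sp(ω_E)·Sp(ω_F), i.e. Ω((a⊗b)x₁, (a⊗b)x₂, (a⊗b)x₃, (a⊗b)x₄) = Ω(x₁,x₂,x₃,x₄) for all linear automorphisms a of E preserving ω_E and b of F preserving ω_F. -/
open TensorProduct

set_option maxHeartbeats 4000000

lemma perm_sum_succ' {M : Type*} [AddCommMonoid M] (n : ℕ) (g : Equiv.Perm (Fin (n+1)) → M) :
    ∑ σ : Equiv.Perm (Fin (n+1)), g σ
      = ∑ i : Fin (n+1), ∑ τ : Equiv.Perm (Fin n), g (Equiv.Perm.decomposeFin.symm (i, τ)) := by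
  rw [← Equiv.sum_comp Equiv.Perm.decomposeFin.symm g, Fintype.sum_prod_type]

lemma ps4 (g : Equiv.Perm (Fin 4) → ℂ) : ∑ σ : Equiv.Perm (Fin 4), g σ
    = ∑ i : Fin 4, ∑ τ : Equiv.Perm (Fin 3), g (Equiv.Perm.decomposeFin.symm (i, τ)) :=
  perm_sum_succ' 3 g
lemma ps3 (g : Equiv.Perm (Fin 3) → ℂ) : ∑ σ : Equiv.Perm (Fin 3), g σ
    = ∑ i : Fin 3, ∑ τ : Equiv.Perm (Fin 2), g (Equiv.Perm.decomposeFin.symm (i, τ)) :=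
  perm_sum_succ' 2 g
lemma ps2 (g : Equiv.Perm (Fin 2) → ℂ) : ∑ σ : Equiv.Perm (Fin 2), g σ
    = ∑ i : Fin 2, ∑ τ : Equiv.Perm (Fin 1), g (Equiv.Perm.decomposeFin.symm (i, τ)) :=
  perm_sum_succ' 1 g

lemma perm4_expand (f : Fin 4 → Fin 4 → Fin 4 → Fin 4 → ℂ) :
    ∑ σ : Equiv.Perm (Fin 4), ((Equiv.Perm.sign σ : ℤ) : ℂ) * f (σ 0) (σ 1) (σ 2) (σ 3)
      = f 0 1 2 3 - f 0 1 3 2 - f 0 2 1 3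
      + f 0 2 3 1 + f 0 3 1 2 - f 0 3 2 1
      - f 1 0 2 3 + f 1 0 3 2 + f 1 2 0 3
      - f 1 2 3 0 - f 1 3 0 2 + f 1 3 2 0
      + f 2 0 1 3 - f 2 0 3 1 - f 2 1 0 3
      + f 2 1 3 0 + f 2 3 0 1 - f 2 3 1 0
      - f 3 0 1 2 + f 3 0 2 1 + f 3 1 0 2
      - f 3 1 2 0 - f 3 2 0 1 + f 3 2 1 0 := by
  simp only [ps4, ps3, ps2,
    show (2 : Fin 4) = (1 : Fin 3).succ from rfl,
    show (3 : Fin 4) = (2 : Fin 3).succ from rfl,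
    Equiv.Perm.decomposeFin.symm_sign, Equiv.Perm.decomposeFin_symm_apply_zero,
    Equiv.Perm.decomposeFin_symm_apply_one, Equiv.Perm.decomposeFin_symm_apply_succ,
    Fin.sum_univ_succ,
    show (2 : Fin 3) = (1 : Fin 2).succ from rfl]
  simp (config := { decide := true }) [Equiv.swap_apply_def, Fin.sum_univ_zero,
    show ((1:Fin 4) = 0) = False by decide, show ((2:Fin 4) = 0) = False by decide,
    show ((3:Fin 4) = 0) = False by decide, show ((2:Fin 4) = 1) = False by decide,
    show ((3:Fin 4) = 1) = False by decide, show ((3:Fin 4) = 2) = False by decide,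
    show ((0:Fin 4) = 1) = False by decide, show ((0:Fin 4) = 2) = False by decide,
    show ((0:Fin 4) = 3) = False by decide, show ((1:Fin 4) = 2) = False by decide,
    show ((1:Fin 4) = 3) = False by decide, show ((2:Fin 4) = 3) = False by decide,
    show ((1:Fin 3) = 0) = False by decide, show ((2:Fin 3) = 0) = False by decide,
    show ((2:Fin 3) = 1) = False by decide, show ((0:Fin 3) = 1) = False by decide,
    show ((0:Fin 3) = 2) = False by decide, show ((1:Fin 3) = 2) = False by decide,
    show ((1:Fin 2) = 0) = False by decide, show ((0:Fin 2) = 1) = False by decide]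
  ring


/-- Theorem 5.7 of the paper (odd-spin case), linear-algebra content: for
finite-dimensional complex vector spaces `E`, `F` of dimension at least `2` with
nondegenerate alternating bilinear forms `ω_E`, `ω_F`, the alternation `Ω` of the
4-multilinear map `Φ(e₁⊗f₁,…,e₄⊗f₄) = ω_E(e₁,e₂)ω_E(e₃,e₄)ω_F(f₁,f₃)ω_F(f₂,f₄)`
is a nonzero alternating 4-form on `E ⊗ F` invariant under `Sp(ω_E)·Sp(ω_F)`. -/
theorem odd_spin_invariant_four_form
    (E F : Type*) [AddCommGroup E] [Module ℂ E] [AddCommGroup F] [Module ℂ F]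
    [FiniteDimensional ℂ E] [FiniteDimensional ℂ F]
    (hdimE : 2 ≤ Module.finrank ℂ E) (hdimF : 2 ≤ Module.finrank ℂ F)
    (ωE : E →ₗ[ℂ] E →ₗ[ℂ] ℂ) (ωF : F →ₗ[ℂ] F →ₗ[ℂ] ℂ)
    (hωE_alt : ∀ e : E, ωE e e = 0)
    (hωE_nd : ∀ e : E, (∀ e' : E, ωE e e' = 0) → e = 0)
    (hωF_alt : ∀ f : F, ωF f f = 0)
    (hωF_nd : ∀ f : F, (∀ f' : F, ωF f f' = 0) → f = 0)
    (Φ : E ⊗[ℂ] F →ₗ[ℂ] E ⊗[ℂ] F →ₗ[ℂ] E ⊗[ℂ] F →ₗ[ℂ] E ⊗[ℂ] F →ₗ[ℂ] ℂ)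
    (hΦ : ∀ (e₁ e₂ e₃ e₄ : E) (f₁ f₂ f₃ f₄ : F),
      Φ (e₁ ⊗ₜ[ℂ] f₁) (e₂ ⊗ₜ[ℂ] f₂) (e₃ ⊗ₜ[ℂ] f₃) (e₄ ⊗ₜ[ℂ] f₄)
        = ωE e₁ e₂ * ωE e₃ e₄ * ωF f₁ f₃ * ωF f₂ f₄)
    (Ω : (Fin 4 → E ⊗[ℂ] F) → ℂ)
    (hΩ : ∀ v : Fin 4 → E ⊗[ℂ] F,
      Ω v = ∑ σ : Equiv.Perm (Fin 4),
        ((Equiv.Perm.sign σ : ℤ) : ℂ) * Φ (v (σ 0)) (v (σ 1)) (v (σ 2)) (v (σ 3))) :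
    -- Ω is nonzero
    (∃ v : Fin 4 → E ⊗[ℂ] F, Ω v ≠ 0) ∧
    -- Ω is alternating
    (∀ (v : Fin 4 → E ⊗[ℂ] F) (i j : Fin 4), i ≠ j → v i = v j → Ω v = 0) ∧
    -- Ω is Sp(ω_E)·Sp(ω_F)-invariant
    (∀ (a : E ≃ₗ[ℂ] E) (b : F ≃ₗ[ℂ] F),
      (∀ e e' : E, ωE (a e) (a e') = ωE e e') →
      (∀ f f' : F, ωF (b f) (b f') = ωF f f') →
      ∀ v : Fin 4 → E ⊗[ℂ] F,
        Ω (fun i => TensorProduct.map a.toLinearMap b.toLinearMap (v i)) = Ω v) := by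
  have hE_skew : ∀ x y : E, ωE y x = -ωE x y := by
    intro x y
    have h := hωE_alt (x + y)
    simp only [map_add, LinearMap.add_apply, hωE_alt] at h
    linear_combination h
  have hF_skew : ∀ x y : F, ωF y x = -ωF x y := by
    intro x y
    have h := hωF_alt (x + y)
    simp only [map_add, LinearMap.add_apply, hωF_alt] at h
    linear_combination h
  refine ⟨?_, ?_, ?_⟩
  · -- nonzero
    have : Nontrivial E := Module.nontrivial_of_finrank_pos (R := ℂ) (by omega)
    have : Nontrivial F := Module.nontrivial_of_finrank_pos (R := ℂ) (by omega)
    obtain ⟨e₁, he₁⟩ := exists_ne (0 : E)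
    obtain ⟨f₁, hf₁⟩ := exists_ne (0 : F)
    have hc : ∃ e₂, ωE e₁ e₂ ≠ 0 := by
      by_contra h
      push_neg at h
      exact he₁ (hωE_nd e₁ fun e' => by simpa using h e')
    have hd : ∃ f₂, ωF f₁ f₂ ≠ 0 := by
      by_contra h
      push_neg at h
      exact hf₁ (hωF_nd f₁ fun f' => by simpa using h f')
    obtain ⟨e₂, hc⟩ := hc
    obtain ⟨f₂, hd⟩ := hd
    refine ⟨![e₁ ⊗ₜ f₁, e₂ ⊗ₜ f₁, e₁ ⊗ₜ f₂, e₂ ⊗ₜ f₂], ?_⟩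
    rw [hΩ]
    rw [perm4_expand (fun i j k l =>
      Φ (![e₁ ⊗ₜ f₁, e₂ ⊗ₜ f₁, e₁ ⊗ₜ f₂, e₂ ⊗ₜ f₂] i)
        (![e₁ ⊗ₜ f₁, e₂ ⊗ₜ f₁, e₁ ⊗ₜ f₂, e₂ ⊗ₜ f₂] j)
        (![e₁ ⊗ₜ f₁, e₂ ⊗ₜ f₁, e₁ ⊗ₜ f₂, e₂ ⊗ₜ f₂] k)
        (![e₁ ⊗ₜ f₁, e₂ ⊗ₜ f₁, e₁ ⊗ₜ f₂, e₂ ⊗ₜ f₂] l))]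
    simp only [Matrix.cons_val_zero, Matrix.cons_val_one, Matrix.head_cons,
      Matrix.cons_val_two, Matrix.tail_cons, Matrix.cons_val_three, Matrix.head_fin_const]
    simp only [hΦ, hωE_alt, hωF_alt, hE_skew e₁ e₂, hF_skew f₁ f₂]
    have : (12 : ℂ) * (ωE e₁ e₂ * ωE e₁ e₂) * (ωF f₁ f₂ * ωF f₁ f₂) ≠ 0 := by
      refine mul_ne_zero (mul_ne_zero (by norm_num) (mul_ne_zero hc hc)) (mul_ne_zero hd hd)
    intro hzero
    apply this
    linear_combination hzero
  · -- alternating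
    intro v i j hij hv
    rw [hΩ]
    have hvs : ∀ x : Fin 4, v (Equiv.swap i j x) = v x := by
      intro x
      rcases eq_or_ne x i with rfl | hxi
      · rw [Equiv.swap_apply_left, hv]
      rcases eq_or_ne x j with rfl | hxj
      · rw [Equiv.swap_apply_right, hv]
      · rw [Equiv.swap_apply_of_ne_of_ne hxi hxj]
    set g : Equiv.Perm (Fin 4) → ℂ := fun σ =>
      ((Equiv.Perm.sign σ : ℤ) : ℂ) * Φ (v (σ 0)) (v (σ 1)) (v (σ 2)) (v (σ 3)) with hg
    have key : ∑ σ : Equiv.Perm (Fin 4), g σ = -∑ σ : Equiv.Perm (Fin 4), g σ := by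
      nth_rewrite 1 [← Equiv.sum_comp (Equiv.mulLeft (Equiv.swap i j)) g]
      rw [← Finset.sum_neg_distrib]
      refine Finset.sum_congr rfl fun σ _ => ?_
      simp only [hg, Equiv.coe_mulLeft, Equiv.Perm.mul_apply, hvs, Equiv.Perm.sign_mul,
        Equiv.Perm.sign_swap hij]
      push_cast
      ring
    have h2 : (2 : ℂ) * ∑ σ : Equiv.Perm (Fin 4), g σ = 0 := by linear_combination key
    have := mul_eq_zero.mp h2
    simpa using this
  · -- invariance
    intro a b ha hb v
    rw [hΩ, hΩ]
    refine Finset.sum_congr rfl fun σ _ => ?_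
    congr 1
    set T := TensorProduct.map a.toLinearMap b.toLinearMap with hT
    have key : ∀ x₁ x₂ x₃ x₄ : E ⊗[ℂ] F,
        Φ (T x₁) (T x₂) (T x₃) (T x₄) = Φ x₁ x₂ x₃ x₄ := by
      intro x₁
      induction x₁ using TensorProduct.induction_on with
      | zero => intro x₂ x₃ x₄; simp
      | add y z hy hz => intro x₂ x₃ x₄
                         simp only [map_add, LinearMap.add_apply, hy, hz]
      | tmul e₁ f₁ =>
        intro x₂
        induction x₂ using TensorProduct.induction_on with
        | zero => intro x₃ x₄; simp
        | add y z hy hz => intro x₃ x₄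
                           simp only [map_add, LinearMap.add_apply, hy, hz]
        | tmul e₂ f₂ =>
          intro x₃
          induction x₃ using TensorProduct.induction_on with
          | zero => intro x₄; simp
          | add y z hy hz => intro x₄
                             simp only [map_add, LinearMap.add_apply, hy, hz]
          | tmul e₃ f₃ =>
            intro x₄
            induction x₄ using TensorProduct.induction_on with
            | zero => simp
            | add y z hy hz => simp only [map_add, LinearMap.add_apply, hy, hz]
            | tmul e₄ f₄ =>
              simp only [hT, TensorProduct.map_tmul, LinearEquiv.coe_coe, hΦ, ha, hb]
    exact key _ _ _ _
end

section
/- Let E and F be finite-dimensional complex vector spaces with dim E ≥ 2 and dim F ≥ 2, and let γ_E and γ_F be nondegenerate symmetric bilinear forms on E and F respectively. Let Φ : (E ⊗ F)⁴ → ℂ be the 4-multilinear map determined on decomposable elements by Φ(e₁⊗f₁, e₂⊗f₂, e₃⊗f₃, e₄⊗f₄) = γ_E(e₁,e₂)·γ_E(e₃,e₄)·γ_F(f₁,f₃)·γ_F(f₂,f₄), and define the 4-form Ω on E ⊗ F as its alternation, Ω(x₁,x₂,x₃,x₄) := Σ_{σ ∈ S₄} sgn(σ)·Φ(x_{σ(1)},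 x_{σ(2)}, x_{σ(3)}, x_{σ(4)}). Then Ω is a nonzero alternating 4-linear form on E ⊗ F, invariant under all automorphisms of the form a ⊗ b with a preserving γ_E and b preserving γ_F. -/
/-!
The alternation of any function of four vectors vanishes on repeated arguments, and `Ω` inherits
invariance from `Φ`, which is invariant under `a ⊗ b` because on pure tensors it is a product of
values of `γ_E` and `γ_F`. For non-vanishing, take `γ_E`-orthogonal anisotropic `x, y ∈ E` and
`γ_F`-orthogonal anisotropic `u, w ∈ F` (from orthogonal bases). On
`(x ⊗ u, x ⊗ w, y ⊗ u, y ⊗ w)` exactly the four permutations of the Klein four-group contribute,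
each with sign `+1` and value `γ_E(x,x) γ_E(y,y) γ_F(u,u) γ_F(w,w)`.
-/

open TensorProduct

theorem sum_sign_mul_comp_perm_eq_zero_of_eq {ι α R : Type*} [Fintype ι] [DecidableEq ι] [Ring R]
    (f : (ι → α) → R) {v : ι → α} {i j : ι} (hij : i ≠ j) (hv : v i = v j) :
    ∑ σ : Equiv.Perm ι, ((Equiv.Perm.sign σ : ℤ) : R) * f (v ∘ σ) = 0 :=
  Finset.sum_involution (fun σ _ => Equiv.swap i j * σ)
    (fun σ _ => by
      simp [Equiv.Perm.sign_swap hij, Function.comp_def, Equiv.apply_swap_eq_self hv])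
    (fun σ _ _ => (not_congr Equiv.swap_mul_eq_iff).mpr hij) (fun σ _ => Finset.mem_univ _)
    fun σ _ => Equiv.swap_mul_involutive i j σ

theorem sum_perm_fin_four_sign_mul {R : Type*} [CommRing R]
    (g : Fin 4 → Fin 4 → Fin 4 → Fin 4 → R) :
    ∑ σ : Equiv.Perm (Fin 4), ((Equiv.Perm.sign σ : ℤ) : R) * g (σ 0) (σ 1) (σ 2) (σ 3)
    = g 0 1 2 3 - g 0 1 3 2 - g 0 2 1 3 + g 0 2 3 1 + g 0 3 1 2 - g 0 3 2 1
    - g 1 0 2 3 + g 1 0 3 2 + g 1 2 0 3 - g 1 2 3 0 - g 1 3 0 2 + g 1 3 2 0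
    + g 2 0 1 3 - g 2 0 3 1 - g 2 1 0 3 + g 2 1 3 0 + g 2 3 0 1 - g 2 3 1 0
    - g 3 0 1 2 + g 3 0 2 1 + g 3 1 0 2 - g 3 1 2 0 - g 3 2 0 1 + g 3 2 1 0 := by
  have apply_two (p : Fin 4) (e : Equiv.Perm (Fin 3)) :
      Equiv.Perm.decomposeFin.symm (p, e) 2 = Equiv.swap 0 p (e 1).succ :=
    Equiv.Perm.decomposeFin_symm_apply_succ e p 1
  have apply_three (p : Fin 4) (e : Equiv.Perm (Fin 3)) :
      Equiv.Perm.decomposeFin.symm (p, e) 3 = Equiv.swap 0 p (e 2).succ :=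
    Equiv.Perm.decomposeFin_symm_apply_succ e p 2
  have apply_two' (p : Fin 3) (e : Equiv.Perm (Fin 2)) :
      Equiv.Perm.decomposeFin.symm (p, e) 2 = Equiv.swap 0 p (e 1).succ :=
    Equiv.Perm.decomposeFin_symm_apply_succ e p 1
  simp only [Finset.univ_perm_fin_succ, Finset.sum_map, ← Finset.univ_product_univ,
    Finset.sum_product]
  simp [Fin.sum_univ_succ, apply_two, apply_three, apply_two', Equiv.swap_apply_def]
  ring

theorem LinearMap.BilinForm.exists_orthogonal_anisotropic_pair {K V : Type*} [Field K]
    [Invertible (2 : K)] [AddCommGroup V] [Module K V] [FiniteDimensional K V]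
    {B : LinearMap.BilinForm K V} (hB : LinearMap.IsSymm B) (hsep : B.SeparatingLeft)
    (hdim : 2 ≤ Module.finrank K V) :
    ∃ x y : V, B x x ≠ 0 ∧ B y y ≠ 0 ∧ B x y = 0 ∧ B y x = 0 := by
  obtain ⟨b, hb⟩ := LinearMap.BilinForm.exists_orthogonal_basis hB
  have h01 : (⟨0, by omega⟩ : Fin (Module.finrank K V)) ≠ ⟨1, by omega⟩ := by simp
  exact ⟨b _, b _, hb.not_isOrtho_basis_self_of_separatingLeft hsep _,
    hb.not_isOrtho_basis_self_of_separatingLeft hsep _, hb h01, hb h01.symm⟩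

theorem TensorProduct.apply_comp₄_eq_of_forall_tmul {R M N P : Type*} [CommRing R]
    [AddCommGroup M] [Module R M] [AddCommGroup N] [Module R N] [AddCommGroup P] [Module R P]
    (Φ : M ⊗[R] N →ₗ[R] M ⊗[R] N →ₗ[R] M ⊗[R] N →ₗ[R] M ⊗[R] N →ₗ[R] P)
    (g : M ⊗[R] N →ₗ[R] M ⊗[R] N)
    (h : ∀ (e₁ e₂ e₃ e₄ : M) (f₁ f₂ f₃ f₄ : N),
      Φ (g (e₁ ⊗ₜ f₁)) (g (e₂ ⊗ₜ f₂)) (g (e₃ ⊗ₜ f₃)) (g (e₄ ⊗ₜ f₄))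
        = Φ (e₁ ⊗ₜ f₁) (e₂ ⊗ₜ f₂) (e₃ ⊗ₜ f₃) (e₄ ⊗ₜ f₄))
    (x y z w : M ⊗[R] N) : Φ (g x) (g y) (g z) (g w) = Φ x y z w := by
  -- `Ψ x y z w = Φ (g x) (g y) (g z) (g w)`, written as a linear map so that `ext` applies.
  let Ψ := (Φ.compl₁₂ g g).compr₂ (LinearMap.lcomp R _ g ∘ₗ
    LinearMap.llcomp R (M ⊗[R] N) (M ⊗[R] N →ₗ[R] P) _ (LinearMap.lcomp R P g))
  have hΨ : Ψ = Φ := by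
    ext e₁ f₁ e₂ f₂ e₃ f₃ e₄ f₄
    exact h e₁ e₂ e₃ e₄ f₁ f₂ f₃ f₄
  exact congr($hΨ x y z w)

/-- The even-spin analogue of Theorem 5.7 of the paper: for finite-dimensional
complex vector spaces `E`, `F` of dimension at least `2` with nondegenerate
symmetric bilinear forms `γ_E`, `γ_F`, the alternation `Ω` of the 4-multilinear
map `Φ(e₁⊗f₁,…,e₄⊗f₄) = γ_E(e₁,e₂)γ_E(e₃,e₄)γ_F(f₁,f₃)γ_F(f₂,f₄)` is a nonzero
alternating 4-form on `E ⊗ F` invariant under automorphisms `a ⊗ b` with `a`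
preserving `γ_E` and `b` preserving `γ_F`. -/
theorem even_spin_invariant_four_form
    (E F : Type*) [AddCommGroup E] [Module ℂ E] [AddCommGroup F] [Module ℂ F]
    [FiniteDimensional ℂ E] [FiniteDimensional ℂ F]
    (hdimE : 2 ≤ Module.finrank ℂ E) (hdimF : 2 ≤ Module.finrank ℂ F)
    (γE : E →ₗ[ℂ] E →ₗ[ℂ] ℂ) (γF : F →ₗ[ℂ] F →ₗ[ℂ] ℂ)
    (hγE_symm : ∀ e e' : E, γE e e' = γE e' e)
    (hγE_nd : ∀ e : E, (∀ e' : E, γE e e' = 0) → e = 0)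
    (hγF_symm : ∀ f f' : F, γF f f' = γF f' f)
    (hγF_nd : ∀ f : F, (∀ f' : F, γF f f' = 0) → f = 0)
    (Φ : E ⊗[ℂ] F →ₗ[ℂ] E ⊗[ℂ] F →ₗ[ℂ] E ⊗[ℂ] F →ₗ[ℂ] E ⊗[ℂ] F →ₗ[ℂ] ℂ)
    (hΦ : ∀ (e₁ e₂ e₃ e₄ : E) (f₁ f₂ f₃ f₄ : F),
      Φ (e₁ ⊗ₜ[ℂ] f₁) (e₂ ⊗ₜ[ℂ] f₂) (e₃ ⊗ₜ[ℂ] f₃) (e₄ ⊗ₜ[ℂ] f₄)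
        = γE e₁ e₂ * γE e₃ e₄ * γF f₁ f₃ * γF f₂ f₄)
    (Ω : (Fin 4 → E ⊗[ℂ] F) → ℂ)
    (hΩ : ∀ v : Fin 4 → E ⊗[ℂ] F,
      Ω v = ∑ σ : Equiv.Perm (Fin 4),
        ((Equiv.Perm.sign σ : ℤ) : ℂ) * Φ (v (σ 0)) (v (σ 1)) (v (σ 2)) (v (σ 3))) :
    -- Ω is nonzero
    (∃ v : Fin 4 → E ⊗[ℂ] F, Ω v ≠ 0) ∧
    -- Ω is alternating
    (∀ (v : Fin 4 → E ⊗[ℂ] F) (i j : Fin 4), i ≠ j → v i = v j → Ω v = 0) ∧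
    -- Ω is invariant under automorphisms `a ⊗ b` preserving the forms
    (∀ (a : E ≃ₗ[ℂ] E) (b : F ≃ₗ[ℂ] F),
      (∀ e e' : E, γE (a e) (a e') = γE e e') →
      (∀ f f' : F, γF (b f) (b f') = γF f f') →
      ∀ v : Fin 4 → E ⊗[ℂ] F,
        Ω (fun i => TensorProduct.map a.toLinearMap b.toLinearMap (v i)) = Ω v) := by
  refine ⟨?nonzero, fun v i j hij hv => ?_, fun a b ha hb v => ?_⟩
  case nonzero =>
    have : Invertible (2 : ℂ) := invertibleOfNonzero two_ne_zero
    obtain ⟨x, y, hx, hy, hxy, hyx⟩ := LinearMap.BilinForm.exists_orthogonal_anisotropic_pair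
      (LinearMap.isSymm_def.mpr hγE_symm) hγE_nd hdimE
    obtain ⟨u, w, hu, hw, huw, hwu⟩ := LinearMap.BilinForm.exists_orthogonal_anisotropic_pair
      (LinearMap.isSymm_def.mpr hγF_symm) hγF_nd hdimF
    let v : Fin 4 → E ⊗[ℂ] F := ![x ⊗ₜ u, x ⊗ₜ w, y ⊗ₜ u, y ⊗ₜ w]
    have hΩv : Ω v = 4 * (γE x x * γE y y * γF u u * γF w w) := by
      rw [hΩ, sum_perm_fin_four_sign_mul fun i j k l => Φ (v i) (v j) (v k) (v l)]
      simp [v, hΦ, hxy, hyx, huw, hwu]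
      ring
    exact ⟨v, by simp [hΩv, hx, hy, hu, hw]⟩
  · rw [hΩ]
    exact sum_sign_mul_comp_perm_eq_zero_of_eq (fun u => Φ (u 0) (u 1) (u 2) (u 3)) hij hv
  · have hΦ_inv := TensorProduct.apply_comp₄_eq_of_forall_tmul Φ
      (TensorProduct.map a.toLinearMap b.toLinearMap) fun _ _ _ _ _ _ _ _ => by simp [hΦ, ha, hb]
    simp only [hΩ, hΦ_inv]
end
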